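/- Let D be a real m×k matrix with DᵀD invertible, and let q ∈ ℝ^k with qᵢ ≥ 0 for all i. Let X₁, …, Xₙ : Ω → ℝ^m be independent, identically distributed square-integrable random vectors on a probability space with mean E[X₁] = D·q and E‖X₁ − Dq‖₂² = σ². Define the estimator q̂ₙ = max((DᵀD)⁻¹·Dᵀ·X̄ₙ, 0) (componentwise maximum with 0), where X̄ₙ = (1/n)·∑_{i=1}^n Xᵢ. Then the statistical risk satisfies E‖q̂ₙ − q‖₂² ≤ ‖(DᵀD)⁻¹Dᵀ‖²_{op}·σ²/n; in particular the risk is of order O(1/n) in the number of observed days n. -/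

import Mathlib

/-!
Truncating at `0` is the metric projection onto the nonnegative orthant, which contains `q`, so it
cannot increase the distance to `q`. Since `A = (DᵀD)⁻¹Dᵀ` is a left inverse of `D`, the untruncated
estimate minus `q` equals `A (X̄ₙ - Dq)`, whose squared norm is at most `‖A‖² ‖X̄ₙ - Dq‖²`. Finally
`E‖X̄ₙ - Dq‖² = σ²/n`: expanding the square, the cross terms `E⟪Xᵢ - Dq, Xⱼ - Dq⟫` vanish by
independence.
-/

open MeasureTheory ProbabilityTheory Matrix

section
variable {Ω E : Type*} [MeasurableSpace Ω] {P : Measure Ω}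
  [NormedAddCommGroup E] [InnerProductSpace ℝ E]

lemma MeasureTheory.MemLp.integrable_inner {f g : Ω → E} (hf : MemLp f 2 P) (hg : MemLp g 2 P) :
    Integrable (fun ω => inner ℝ (f ω) (g ω)) P :=
  memLp_one_iff_integrable.1 <| (innerSL ℝ).memLp_of_bilin 1 hf hg

variable [CompleteSpace E] [MeasurableSpace E] [BorelSpace E]

lemma ProbabilityTheory.IndepFun.integral_inner_eq_zero {Y Z : Ω → E} (hYZ : IndepFun Y Z P)
    (hY : Integrable Y P) (hZ : Integrable Z P) (hY0 : ∫ ω, Y ω ∂P = 0) :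
    ∫ ω, inner ℝ (Y ω) (Z ω) ∂P = 0 := by
  have h := hYZ.integral_bilin hY hZ (innerSL ℝ)
  rw [hY0, map_zero, _root_.zero_apply] at h
  exact h

lemma integral_norm_sum_sq_of_pairwise_indepFun [IsFiniteMeasure P] {ι : Type*} [Fintype ι]
    {Y : ι → Ω → E} (hindep : Pairwise fun i j => IndepFun (Y i) (Y j) P)
    (hL2 : ∀ i, MemLp (Y i) 2 P) (hmean : ∀ i, ∫ ω, Y i ω ∂P = 0) :
    ∫ ω, ‖∑ i, Y i ω‖ ^ 2 ∂P = ∑ i, ∫ ω, ‖Y i ω‖ ^ 2 ∂P := by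
  classical
  have hint : ∀ i j, Integrable (fun ω => inner ℝ (Y i ω) (Y j ω)) P :=
    fun i j => (hL2 i).integrable_inner (hL2 j)
  have hexpand : ∀ ω, ‖∑ i, Y i ω‖ ^ 2 = ∑ i, ∑ j, inner ℝ (Y i ω) (Y j ω) := by
    intro ω
    simp only [← real_inner_self_eq_norm_sq, sum_inner, inner_sum]
    exact Finset.sum_comm
  simp_rw [hexpand]
  rw [integral_finsetSum _ fun i _ => integrable_finsetSum _ fun j _ => hint i j]
  refine Finset.sum_congr rfl fun i _ => ?_
  rw [integral_finsetSum _ fun j _ => hint i j, Finset.sum_eq_single i]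
  · simp only [real_inner_self_eq_norm_sq]
  · intro j _ hji
    exact (hindep hji.symm).integral_inner_eq_zero ((hL2 i).integrable one_le_two)
      ((hL2 j).integrable one_le_two) (hmean i)
  · simp

lemma integral_norm_sampleMean_sub_sq [IsProbabilityMeasure P] {ι : Type*} [Fintype ι]
    [Nonempty ι] {X : ι → Ω → E} {μ : E} {σ2 : ℝ}
    (hindep : Pairwise fun i j => IndepFun (X i) (X j) P) (hL2 : ∀ i, MemLp (X i) 2 P)
    (hmean : ∀ i, ∫ ω, X i ω ∂P = μ) (hσ : ∀ i, ∫ ω, ‖X i ω - μ‖ ^ 2 ∂P = σ2) :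
    ∫ ω, ‖(Fintype.card ι : ℝ)⁻¹ • ∑ i, X i ω - μ‖ ^ 2 ∂P = σ2 / Fintype.card ι := by
  set n : ℝ := (Fintype.card ι : ℝ)
  have hn : n ≠ 0 := Nat.cast_ne_zero.2 Fintype.card_ne_zero
  have hcenter : ∀ ω, n⁻¹ • ∑ i, X i ω - μ = n⁻¹ • ∑ i, (X i ω - μ) := by
    intro ω
    rw [Finset.sum_sub_distrib, smul_sub, Finset.sum_const, Finset.card_univ,
      ← Nat.cast_smul_eq_nsmul ℝ, inv_smul_smul₀ hn]
  have hcentered : ∫ ω, ‖∑ i, (X i ω - μ)‖ ^ 2 ∂P = n * σ2 := by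
    rw [integral_norm_sum_sq_of_pairwise_indepFun (Y := fun i ω => X i ω - μ)]
    · simp [hσ, n]
    · exact fun i j hij =>
        (hindep hij).comp (measurable_id.sub_const μ) (measurable_id.sub_const μ)
    · exact fun i => (hL2 i).sub (memLp_const μ)
    · intro i
      rw [integral_sub ((hL2 i).integrable one_le_two) (integrable_const μ), hmean i]
      simp
  simp_rw [hcenter, norm_smul, Real.norm_eq_abs, mul_pow, sq_abs, integral_const_mul, hcentered]
  field_simp
end

lemma EuclideanSpace.norm_max_zero_sub_le {ι : Type*} [Fintype ι] (v q : EuclideanSpace ℝ ι)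
    (hq : ∀ i, 0 ≤ q i) :
    ‖(WithLp.toLp 2 fun i => max (v i) 0 : EuclideanSpace ℝ ι) - q‖ ≤ ‖v - q‖ := by
  simp only [EuclideanSpace.norm_eq]
  refine Real.sqrt_le_sqrt (Finset.sum_le_sum fun i _ => pow_le_pow_left₀ (norm_nonneg _) ?_ 2)
  simpa [max_eq_left (hq i)] using abs_max_sub_max_le_abs (v i) (q i) 0

lemma Matrix.norm_toEuclideanLin_sub_le_of_mul_eq_one {m k : Type*} [Fintype m] [Fintype k] [DecidableEq m]
    [DecidableEq k] {A : Matrix k m ℝ} {D : Matrix m k ℝ} (hAD : A * D = 1)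
    (x : EuclideanSpace ℝ m) (q : EuclideanSpace ℝ k) :
    ‖toEuclideanLin A x - q‖ ≤
      ‖LinearMap.toContinuousLinearMap (toEuclideanLin A)‖ * ‖x - WithLp.toLp 2 (D *ᵥ q)‖ := by
  have h : toEuclideanLin A x - q = toEuclideanLin A (x - WithLp.toLp 2 (D *ᵥ q)) := by
    rw [map_sub, toLpLin_apply, toLpLin_apply, mulVec_mulVec, hAD, one_mulVec]
  rw [h]
  exact (LinearMap.toContinuousLinearMap (toEuclideanLin A)).le_opNorm _

theorem truncated_pseudoinverse_risk_bound_general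
    {Ω : Type*} [MeasurableSpace Ω] (P : Measure Ω) [IsProbabilityMeasure P]
    (m k n : ℕ) (hn : 1 ≤ n)
    (D : Matrix (Fin m) (Fin k) ℝ) (hD : IsUnit (Dᵀ * D))
    (q : EuclideanSpace ℝ (Fin k)) (hq : ∀ i, 0 ≤ q i)
    (X : Fin n → Ω → EuclideanSpace ℝ (Fin m))
    (hindep : iIndepFun X P)
    (hL2 : ∀ i, MemLp (X i) 2 P)
    (hmean : ∀ i, ∫ ω, X i ω ∂P = (show EuclideanSpace ℝ (Fin m) from WithLp.toLp 2 (D *ᵥ q)))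
    (σ2 : ℝ)
    (hσ : ∀ i, ∫ ω, ‖X i ω - (show EuclideanSpace ℝ (Fin m) from WithLp.toLp 2 (D *ᵥ q))‖ ^ 2 ∂P = σ2) :
    ∫ ω, ‖(show EuclideanSpace ℝ (Fin k) from
            WithLp.toLp 2 (fun j => max (((Dᵀ * D)⁻¹ *ᵥ (Dᵀ *ᵥ ((n : ℝ)⁻¹ • ∑ i, X i ω))) j) 0)) - q‖ ^ 2 ∂P
      ≤ ‖LinearMap.toContinuousLinearMap (Matrix.toEuclideanLin ((Dᵀ * D)⁻¹ * Dᵀ))‖ ^ 2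
          * σ2 / n := by
  have : Nonempty (Fin n) := ⟨⟨0, hn⟩⟩
  set A := (Dᵀ * D)⁻¹ * Dᵀ
  set T := LinearMap.toContinuousLinearMap (toEuclideanLin A)
  have hAD : A * D = 1 := by
    rw [Matrix.mul_assoc, nonsing_inv_mul _ ((isUnit_iff_isUnit_det _).mp hD)]
  have hsampleMean := integral_norm_sampleMean_sub_sq (fun i j hij => hindep.indepFun hij) hL2
    hmean hσ
  rw [Fintype.card_fin] at hsampleMean
  have hpointwise : ∀ ω, ‖(show EuclideanSpace ℝ (Fin k) from
      WithLp.toLp 2 (fun j => max (((Dᵀ * D)⁻¹ *ᵥ (Dᵀ *ᵥ ((n : ℝ)⁻¹ • ∑ i, X i ω))) j) 0)) - q‖ ^ 2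
      ≤ ‖T‖ ^ 2 * ‖(n : ℝ)⁻¹ • ∑ i, X i ω - WithLp.toLp 2 (D *ᵥ q)‖ ^ 2 := by
    intro ω
    set x := (n : ℝ)⁻¹ • ∑ i, X i ω
    have h := (EuclideanSpace.norm_max_zero_sub_le (toEuclideanLin A x) q hq).trans
      (norm_toEuclideanLin_sub_le_of_mul_eq_one hAD x q)
    rw [toLpLin_apply, WithLp.ofLp_toLp, WithLp.ofLp_smul] at h
    rw [← mul_pow, mulVec_mulVec]
    exact pow_le_pow_left₀ (norm_nonneg _) h 2
  have hL2mean : MemLp (fun ω => (n : ℝ)⁻¹ • ∑ i, X i ω - WithLp.toLp 2 (D *ᵥ q)) 2 P :=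
    ((memLp_finsetSum _ fun i _ => hL2 i).const_smul (n : ℝ)⁻¹).sub (memLp_const _)
  calc _ ≤ ∫ ω, ‖T‖ ^ 2 * ‖(n : ℝ)⁻¹ • ∑ i, X i ω - WithLp.toLp 2 (D *ᵥ q)‖ ^ 2 ∂P :=
        integral_mono_of_nonneg (.of_forall fun ω => by positivity)
          (hL2mean.norm.integrable_sq.const_mul _) (.of_forall hpointwise)
    _ = ‖T‖ ^ 2 * σ2 / n := by rw [integral_const_mul, hsampleMean, mul_div_assoc]

/-- O(1/n) risk bound for the truncated pseudoinverse estimator of the O-D demand mean: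
if `X₁, …, Xₙ` are i.i.d. square-integrable random vectors with mean `D·q` (`q ≥ 0`
componentwise, `DᵀD` invertible) and `E‖X₁ − Dq‖₂² = σ²`, then the estimator
`q̂ₙ = max((DᵀD)⁻¹·Dᵀ·X̄ₙ, 0)` satisfies `E‖q̂ₙ − q‖₂² ≤ ‖(DᵀD)⁻¹Dᵀ‖_op²·σ²/n`. -/
theorem truncated_pseudoinverse_risk_bound
    {Ω : Type*} [MeasurableSpace Ω] (P : Measure Ω) [IsProbabilityMeasure P]
    (m k n : ℕ) (hn : 1 ≤ n)
    (D : Matrix (Fin m) (Fin k) ℝ) (hD : IsUnit (Dᵀ * D))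
    (q : EuclideanSpace ℝ (Fin k)) (hq : ∀ i, 0 ≤ q i)
    (X : Fin n → Ω → EuclideanSpace ℝ (Fin m))
    (hmeas : ∀ i, Measurable (X i))
    (hindep : iIndepFun X P)
    (hident : ∀ i j, IdentDistrib (X i) (X j) P P)
    (hL2 : ∀ i, MemLp (X i) 2 P)
    (hmean : ∀ i, ∫ ω, X i ω ∂P = (show EuclideanSpace ℝ (Fin m) from WithLp.toLp 2 (D *ᵥ q)))
    (σ2 : ℝ)
    (hσ : ∀ i, ∫ ω, ‖X i ω - (show EuclideanSpace ℝ (Fin m) from WithLp.toLp 2 (D *ᵥ q))‖ ^ 2 ∂P = σ2) :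
    ∫ ω, ‖(show EuclideanSpace ℝ (Fin k) from
            WithLp.toLp 2 (fun j => max (((Dᵀ * D)⁻¹ *ᵥ (Dᵀ *ᵥ ((n : ℝ)⁻¹ • ∑ i, X i ω))) j) 0)) - q‖ ^ 2 ∂P
      ≤ ‖LinearMap.toContinuousLinearMap (Matrix.toEuclideanLin ((Dᵀ * D)⁻¹ * Dᵀ))‖ ^ 2
          * σ2 / n :=
  truncated_pseudoinverse_risk_bound_general P m k n hn D hD q hq X hindep hL2 hmean σ2 hσ
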